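/- Adherence is monotone under edge removal: if o' has the same event set as o and →_{o'} ⊆ →_o, then (s0, u) ⊑ o implies (s0, u) ⊑ o'. -/

import Mathlib

variable {S T : Type}

/-- A symbolic trace graph: events, path constraints (state predicates),
and a labeled edge (happens-before) relation. -/
structure STG (S T : Type) where
  events : Set (T × ℕ)
  constraints : Set (S → Prop)
  edges : Set ((T × ℕ) × (S → Prop) × (T × ℕ))

/-- Remove an event and all incident edges from a symbolic trace graph. -/
def STG.remove (o : STG S T) (e : T × ℕ) : STG S T where
  events := o.events \ {e}
  edges := {x | x ∈ o.edges ∧ x.1 ≠ e ∧ x.2.2 ≠ e}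
  constraints := {c | ∃ e1 e2, (e1, c, e2) ∈ o.edges ∧ e1 ≠ e ∧ e2 ≠ e}

/-- Adherence `(s, u) ⊑ o` of an execution to a symbolic trace graph.
The program is given by its (deterministic, partial) transition function `δ`. -/
def adheres (δ : S → T → Option S) : S → List (T × ℕ) → STG S T → Prop
  | _, [], _ => True
  | s, e :: rest, o =>
      e ∈ o.events ∧ (∀ e' c, (e', c, e) ∈ o.edges → ¬ c s) ∧
      ∃ s', δ s e.1 = some s' ∧ adheres δ s' rest (o.remove e)

/-- `reaches δ s u s'` : executing the event sequence `u` from `s` leads to `s'`. -/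
def reaches (δ : S → T → Option S) : S → List (T × ℕ) → S → Prop
  | s, [], sf => sf = s
  | s, e :: rest, sf => ∃ s', δ s e.1 = some s' ∧ reaches δ s' rest sf

/-- Matching `(s, u) ⊨ o`: adherence plus the events of `u` are exactly the events of `o`. -/
def tmatch (δ : S → T → Option S) (s : S) (u : List (T × ℕ)) (o : STG S T) : Prop :=
  adheres δ s u o ∧ {e | e ∈ u} = o.events

/-- The set of synchronization-free continuations of execution `(s0, u)` w.r.t. `o`. -/
def free (δ : S → T → Option S) (s0 : S) (u : List (T × ℕ)) (o : STG S T) :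
    Set (List (T × ℕ)) :=
  {v | v ≠ [] ∧ (∃ s, reaches δ s0 (u ++ v) s) ∧
    ∀ i, (h : i < v.length) → v.get ⟨i, h⟩ ∉ o.events ∨
      adheres δ s0 (u ++ v.take (i + 1)) o}

/-- Valid execution with correct occurrence counts, starting from the counter `cnt`. -/
def isExecC (δ : S → T → Option S) [DecidableEq T] :
    (T → ℕ) → S → List (T × ℕ) → Prop
  | _, _, [] => True
  | cnt, s, (t, k) :: rest =>
      k = cnt t ∧ ∃ s', δ s t = some s' ∧
        isExecC δ (Function.update cnt t (cnt t + 1)) s' rest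

/-- `(s, u)` is a valid execution: transitions exist and each event `(t, k)`
carries the number `k` of prior occurrences of thread `t`. -/
def isExec (δ : S → T → Option S) [DecidableEq T] (s : S) (u : List (T × ℕ)) : Prop :=
  isExecC δ (fun _ => 0) s u

/-- The prefix order on symbolic trace graphs. -/
def STG.lt (o1 o2 : STG S T) : Prop :=
  o1.events ⊂ o2.events ∧
  o1.edges = {x | x ∈ o2.edges ∧ x.1 ∈ o1.events ∧ x.2.2 ∈ o1.events} ∧
  o1.constraints = {c | ∃ e1 e2, (e1, c, e2) ∈ o1.edges} ∧
  ∀ e1 c e2, (e1, c, e2) ∈ o2.edges → e1 ∉ o1.events → e2 ∉ o1.events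

/-- The list of states visited by an execution. -/
def chain (δ : S → T → Option S) : S → List (T × ℕ) → List S → Prop
  | s, [], l => l = [s]
  | s, e :: rest, l => ∃ s' l', δ s e.1 = some s' ∧ chain δ s' rest l' ∧ l = s :: l'

namespace STG

theorem remove_events_subset_remove_events {o o' : STG S T} (h : o.events ⊆ o'.events)
    (e : T × ℕ) : (o.remove e).events ⊆ (o'.remove e).events :=
  Set.sdiff_subset_sdiff_left h

theorem remove_edges_subset_remove_edges {o o' : STG S T} (h : o'.edges ⊆ o.edges)
    (e : T × ℕ) : (o'.remove e).edges ⊆ (o.remove e).edges :=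
  fun _ hx => ⟨h hx.1, hx.2⟩

end STG

theorem adheres_mono {δ : S → T → Option S} {o o' : STG S T} (hE : o.events ⊆ o'.events)
    (hedge : o'.edges ⊆ o.edges) {s : S} {u : List (T × ℕ)} (h : adheres δ s u o) :
    adheres δ s u o' := by
  induction u generalizing s o o' with
  | nil => trivial
  | cons e rest ih =>
    obtain ⟨he, hfree, s', hstep, hrest⟩ := h
    exact ⟨hE he, fun e' c hc => hfree e' c (hedge hc), s', hstep,
      ih (STG.remove_events_subset_remove_events hE e)
        (STG.remove_edges_subset_remove_edges hedge e) hrest⟩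

/-- adherence is monotone under edge removal: same event set,
fewer edges. -/
theorem adheres_mono_edges (δ : S → T → Option S) (o o' : STG S T)
    (hE : o'.events = o.events) (hedge : o'.edges ⊆ o.edges)
    (s0 : S) (u : List (T × ℕ)) (h : adheres δ s0 u o) :
    adheres δ s0 u o' :=
  adheres_mono hE.ge hedge h
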